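/- arXiv:1902.02524 — 10 statements merged into one kernel-verified Lean document; each statement's English description precedes it below -/
import Mathlib

section
/- Let A_Δ be an n×n real matrix, C a p×n real matrix, Δ a nonzero real number, A_δΔ := Δ⁻¹ • (A_Δ − I), and N ≥ 1 a natural number. Let C_o^d be the (N·p)×n real matrix whose i-th block row (for 0 ≤ i ≤ N−1) is C * A_Δ^i, and let C_o^δ be the (N·p)×n real matrix whose i-th block row is C * A_δΔ^i. Then rank(C_o^δ) = rank(C_o^d). -/
/-!
Since `A_δΔ = Δ⁻¹ • A_Δ - Δ⁻¹ • 1` and `A_Δ = Δ • A_δΔ + 1`, each system matrix is a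
polynomial of degree at most one in the other. So for `i < N` the power `B ^ i` is a linear
combination of the powers `A ^ k` with `k ≤ i < N`: every row of one observability matrix lies
in the row space of the other, and the two ranks bound each other.
-/

open Polynomial

theorem Matrix.rank_le_rank_of_row_mem_span {K m m' n : Type*} [Field K] [Finite m] [Finite m']
    [Fintype n] (X : Matrix m n K) (Y : Matrix m' n K)
    (h : ∀ i, Y i ∈ Submodule.span K (Set.range X.row)) : Y.rank ≤ X.rank := by
  rw [Matrix.rank_eq_finrank_span_row, Matrix.rank_eq_finrank_span_row]
  exact Submodule.finrank_mono (Submodule.span_le.mpr (Set.range_subset_iff.mpr h))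

section Observability

variable {K n p : Type*} [Field K] [Fintype n] [DecidableEq n]

def observabilityMatrix (C : Matrix p n K) (A : Matrix n n K) (N : ℕ) : Matrix (Fin N × p) n K :=
  fun q => (C * A ^ (q.1 : ℕ)) q.2

theorem rank_observabilityMatrix_aeval_le [Finite p] (C : Matrix p n K) (A : Matrix n n K)
    {q : K[X]} (hq : q.natDegree ≤ 1) (N : ℕ) :
    (observabilityMatrix C (aeval A q) N).rank ≤ (observabilityMatrix C A N).rank := by
  refine Matrix.rank_le_rank_of_row_mem_span _ _ fun ⟨i, r⟩ => ?_
  have hdeg : (q ^ (i : ℕ)).natDegree < N :=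
    (natDegree_pow_le_of_le _ hq).trans_lt (by simp)
  have hrow : ∀ k < N,
      (C * A ^ k) r ∈ Submodule.span K (Set.range (observabilityMatrix C A N).row) :=
    fun k hk => Submodule.subset_span ⟨(⟨k, hk⟩, r), rfl⟩
  simp only [observabilityMatrix, ← map_pow, aeval_eq_sum_range' hdeg, Matrix.mul_sum,
    Matrix.mul_smul]
  exact Finset.sum_apply (M := fun _ => n → K) r _ _ ▸
    Submodule.sum_mem _ fun k hk => Submodule.smul_mem _ _ (hrow k (Finset.mem_range.mp hk))

end Observability

theorem rank_delta_observability_eq_rank_discrete_observability_general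
    {n p : ℕ} (AΔ : Matrix (Fin n) (Fin n) ℝ) (C : Matrix (Fin p) (Fin n) ℝ)
    (Δ : ℝ) (hΔ : Δ ≠ 0)
    (AδΔ : Matrix (Fin n) (Fin n) ℝ) (hAδΔ : AδΔ = Δ⁻¹ • (AΔ - 1))
    (N : ℕ)
    (Cod Coδ : Matrix (Fin N × Fin p) (Fin n) ℝ)
    (hCod : ∀ (i : Fin N) (r : Fin p) (j : Fin n), Cod (i, r) j = (C * AΔ ^ (i : ℕ)) r j)
    (hCoδ : ∀ (i : Fin N) (r : Fin p) (j : Fin n), Coδ (i, r) j = (C * AδΔ ^ (i : ℕ)) r j) :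
    Coδ.rank = Cod.rank := by
  obtain rfl : Cod = observabilityMatrix C AΔ N := by ext ⟨i, r⟩ j; exact hCod i r j
  obtain rfl : Coδ = observabilityMatrix C AδΔ N := by ext ⟨i, r⟩ j; exact hCoδ i r j
  have hδ : AδΔ = aeval AΔ (Polynomial.C Δ⁻¹ * X + Polynomial.C (-Δ⁻¹)) := by
    simp [hAδΔ, Algebra.algebraMap_eq_smul_one, sub_eq_add_neg]
  have hd : AΔ = aeval AδΔ (Polynomial.C Δ * X + Polynomial.C 1) := by
    simp [hAδΔ, Algebra.algebraMap_eq_smul_one, smul_smul, hΔ]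
  apply le_antisymm
  · rw [hδ]
    exact rank_observabilityMatrix_aeval_le C AΔ natDegree_linear_le N
  · rw [hd]
    exact rank_observabilityMatrix_aeval_le C AδΔ natDegree_linear_le N

/-- **Rank equality of observability matrices (Theorem 1).**
The delta-operator observability matrix `C_o^δ` (block rows `C * A_δΔ ^ i`) has the
same rank as the discrete-time observability matrix `C_o^d` (block rows `C * A_Δ ^ i`). -/
theorem rank_delta_observability_eq_rank_discrete_observability
    {n p : ℕ} (AΔ : Matrix (Fin n) (Fin n) ℝ) (C : Matrix (Fin p) (Fin n) ℝ)
    (Δ : ℝ) (hΔ : Δ ≠ 0)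
    (AδΔ : Matrix (Fin n) (Fin n) ℝ) (hAδΔ : AδΔ = Δ⁻¹ • (AΔ - 1))
    (N : ℕ) (hN : 1 ≤ N)
    (Cod Coδ : Matrix (Fin N × Fin p) (Fin n) ℝ)
    (hCod : ∀ (i : Fin N) (r : Fin p) (j : Fin n), Cod (i, r) j = (C * AΔ ^ (i : ℕ)) r j)
    (hCoδ : ∀ (i : Fin N) (r : Fin p) (j : Fin n), Coδ (i, r) j = (C * AδΔ ^ (i : ℕ)) r j) :
    Coδ.rank = Cod.rank :=
  rank_delta_observability_eq_rank_discrete_observability_general AΔ C Δ hΔ AδΔ hAδΔ N Cod Coδ hCod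
    hCoδ
end

section
/- Let A be an n×n real matrix and C a p×n real matrix. Then for every natural number i, the function Δ ↦ C * (Δ⁻¹ • (exp(Δ • A) − I))^i tends to C * A^i as Δ tends to 0 along nonzero reals. Consequently, the delta-operator observability matrix C_o^δ (whose i-th block row is C·A_δΔ^i with A_δΔ := Δ⁻¹ • (exp(ΔA) − I)) converges to the continuous-time observability matrix C_o (whose i-th block row is C·A^i) as the sampling period Δ tends to 0. -/
open Filter Topology
-- Any algebra norm would do: it only serves to make matrices a Banach algebra.
open scoped Matrix.Norms.Operator

theorem tendsto_inv_smul_exp_smul_sub_one {𝕂 𝔸 : Type*} [RCLike 𝕂] [NormedRing 𝔸]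
    [NormedAlgebra 𝕂 𝔸] [CompleteSpace 𝔸] (a : 𝔸) :
    Tendsto (fun t : 𝕂 => t⁻¹ • (NormedSpace.exp (t • a) - 1)) (𝓝[≠] 0) (𝓝 a) := by
  have hderiv : HasDerivAt (fun t : 𝕂 => NormedSpace.exp (t • a)) a 0 := by
    simpa using hasDerivAt_exp_smul_const (𝕂 := 𝕂) a 0
  simpa using hderiv.tendsto_slope_zero

/-- Every block row `C * A_δΔ ^ i` of the delta-operator observability matrix
(with `A_δΔ = Δ⁻¹ • (exp(ΔA) − I)`) converges to the corresponding block row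
`C * A ^ i` of the continuous-time observability matrix as the sampling period `Δ`
tends to `0` along nonzero reals. -/
theorem delta_observability_tendsto_continuous_observability
    {n p : ℕ} (A : Matrix (Fin n) (Fin n) ℝ) (C : Matrix (Fin p) (Fin n) ℝ) :
    ∀ i : ℕ,
      Tendsto (fun Δ : ℝ => C * (Δ⁻¹ • (NormedSpace.exp (Δ • A) - 1)) ^ i)
        (𝓝[≠] (0 : ℝ)) (𝓝 (C * A ^ i)) := by
  intro i
  have hcont : Continuous (fun M : Matrix (Fin n) (Fin n) ℝ => C * M ^ i) :=
    continuous_const.matrix_mul (continuous_pow i)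
  exact (hcont.tendsto A).comp (tendsto_inv_smul_exp_smul_sub_one A)
end

section
/- Let A_Δ be an n×n real matrix, B_Δ an n×m real matrix, Δ a nonzero real number, A_δΔ := Δ⁻¹ • (A_Δ − I), B_δΔ := Δ⁻¹ • B_Δ, and N ≥ 1. Then (i) for every natural number k, A_δΔ^k * B_δΔ = Δ^(−(k+1)) • (∑_{j=0}^{k} (−1)^(k−j) * (k.choose j) • (A_Δ^j * B_Δ)), and (ii) the n×(N·m) controllability matrix with block columns B_Δ, A_Δ·B_Δ, …, A_Δ^{N−1}·B_Δ has the same rank as the n×(N·m) matrix with block columns B_δΔ, A_δΔ·B_δΔ, …, A_δΔ^{N−1}·B_δΔ. -/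
open Finset

/-!
Both controllability matrices have the same column space. Indeed, the span of the blocks
`A ^ j * B` with `j < N` does not change when `A` is replaced by an affine image `c • A + d • 1`
or `B` by a multiple `e • B`: by the binomial theorem, `(A + d • 1) ^ k * B` is a combination of
the blocks `A ^ j * B` with `j ≤ k`. Since `c, e ≠ 0` these substitutions can be inverted, and the
delta-operator pair `(A_δΔ, B_δΔ)` is such a substitution of `(A_Δ, B_Δ)`.
-/

namespace Matrix

theorem span_col_le_of_blocks {R ι n m : Type*} [Semiring R]
    {C C' : Matrix n (ι × m) R} {F G : ι → Matrix n m R}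
    (hC : ∀ i j r, C i (j, r) = F j i r) (hC' : ∀ i j r, C' i (j, r) = G j i r)
    (h : Submodule.span R (Set.range F) ≤ Submodule.span R (Set.range G)) :
    Submodule.span R (Set.range C.col) ≤ Submodule.span R (Set.range C'.col) := by
  refine Submodule.span_le.mpr (Set.range_subset_iff.mpr fun ⟨j, r⟩ => ?_)
  let colMap : Matrix n m R →ₗ[R] n → R :=
    LinearMap.proj r ∘ₗ (transposeLinearEquiv n m R R).toLinearMap
  have hC_col : C.col (j, r) = colMap (F j) := funext fun i => hC i j r
  have hG_col : colMap '' Set.range G ⊆ Set.range C'.col := by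
    rintro _ ⟨_, ⟨k, rfl⟩, rfl⟩
    exact ⟨(k, r), funext fun i => hC' i k r⟩
  have hmap : (Submodule.span R (Set.range F)).map colMap ≤ Submodule.span R (Set.range C'.col) :=
    calc (Submodule.span R (Set.range F)).map colMap
      _ ≤ (Submodule.span R (Set.range G)).map colMap := Submodule.map_mono h
      _ = Submodule.span R (colMap '' Set.range G) := Submodule.map_span _ _
      _ ≤ Submodule.span R (Set.range C'.col) := Submodule.span_mono hG_col
  exact hmap (hC_col ▸ Submodule.mem_map_of_mem (Submodule.subset_span ⟨j, rfl⟩))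

theorem rank_eq_of_span_blocks_eq {R ι n m : Type*} [CommRing R] [Fintype ι] [Fintype m]
    {C C' : Matrix n (ι × m) R} {F G : ι → Matrix n m R}
    (hC : ∀ i j r, C i (j, r) = F j i r) (hC' : ∀ i j r, C' i (j, r) = G j i r)
    (h : Submodule.span R (Set.range F) = Submodule.span R (Set.range G)) :
    C.rank = C'.rank := by
  rw [rank_eq_finrank_span_cols, rank_eq_finrank_span_cols,
    (span_col_le_of_blocks hC hC' h.le).antisymm (span_col_le_of_blocks hC' hC h.ge)]

section blockKrylov

variable {R : Type*} [CommRing R] {n m : Type*} [Fintype n] [DecidableEq n]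

theorem add_smul_one_pow_mul (A : Matrix n n R) (B : Matrix n m R) (d : R) (k : ℕ) :
    (A + d • 1) ^ k * B =
      ∑ j ∈ range (k + 1), (d ^ (k - j) * (k.choose j : R)) • (A ^ j * B) := by
  rw [((Commute.one_right A).smul_right d).add_pow, Matrix.sum_mul]
  refine Finset.sum_congr rfl fun j _ => ?_
  rw [← nsmul_eq_mul', smul_pow, one_pow, Matrix.mul_smul, mul_one, smul_mul, Matrix.smul_mul,
    ← Nat.cast_smul_eq_nsmul R, smul_smul, mul_comm]

def blockKrylov (A : Matrix n n R) (B : Matrix n m R) (N : ℕ) : Submodule R (Matrix n m R) :=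
  Submodule.span R (Set.range fun j : Fin N => A ^ (j : ℕ) * B)

theorem blockKrylov_smul_left_le (A : Matrix n n R) (B : Matrix n m R) (N : ℕ) (c : R) :
    blockKrylov (c • A) B N ≤ blockKrylov A B N := by
  refine Submodule.span_le.mpr (Set.range_subset_iff.mpr fun j => ?_)
  rw [smul_pow, Matrix.smul_mul]
  exact Submodule.smul_mem _ _ (Submodule.subset_span ⟨j, rfl⟩)

theorem blockKrylov_smul_right_le (A : Matrix n n R) (B : Matrix n m R) (N : ℕ) (e : R) :
    blockKrylov A (e • B) N ≤ blockKrylov A B N := by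
  refine Submodule.span_le.mpr (Set.range_subset_iff.mpr fun j => ?_)
  rw [Matrix.mul_smul]
  exact Submodule.smul_mem _ _ (Submodule.subset_span ⟨j, rfl⟩)

theorem blockKrylov_add_smul_one_le (A : Matrix n n R) (B : Matrix n m R) (N : ℕ) (d : R) :
    blockKrylov (A + d • 1) B N ≤ blockKrylov A B N := by
  refine Submodule.span_le.mpr (Set.range_subset_iff.mpr fun k => ?_)
  rw [add_smul_one_pow_mul]
  refine Submodule.sum_mem _ fun j hj => Submodule.smul_mem _ _ (Submodule.subset_span ?_)
  exact ⟨⟨j, (mem_range.mp hj).trans_le k.isLt⟩, rfl⟩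

theorem blockKrylov_affine_le (A : Matrix n n R) (B : Matrix n m R) (N : ℕ) (c d e : R) :
    blockKrylov (c • A + d • 1) (e • B) N ≤ blockKrylov A B N :=
  calc blockKrylov (c • A + d • 1) (e • B) N
      _ ≤ blockKrylov (c • A + d • 1) B N := blockKrylov_smul_right_le _ _ _ _
      _ ≤ blockKrylov (c • A) B N := blockKrylov_add_smul_one_le _ _ _ _
      _ ≤ blockKrylov A B N := blockKrylov_smul_left_le _ _ _ _

theorem blockKrylov_affine_eq {K : Type*} [Field K] (A : Matrix n n K) (B : Matrix n m K)
    (N : ℕ) {c e : K} (hc : c ≠ 0) (he : e ≠ 0) (d : K) :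
    blockKrylov (c • A + d • 1) (e • B) N = blockKrylov A B N := by
  refine le_antisymm (blockKrylov_affine_le A B N c d e) ?_
  have hA : A = c⁻¹ • (c • A + d • 1) + (-(c⁻¹ * d)) • 1 := by
    rw [smul_add, smul_smul, smul_smul, inv_mul_cancel₀ hc, one_smul, neg_smul,
      add_neg_cancel_right]
  have hB : B = e⁻¹ • e • B := by rw [smul_smul, inv_mul_cancel₀ he, one_smul]
  conv_lhs => rw [hA, hB]
  exact blockKrylov_affine_le _ _ N _ _ _

end blockKrylov

end Matrix

theorem delta_controllability_blocks_and_rank_general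
    {n m : ℕ} (AΔ : Matrix (Fin n) (Fin n) ℝ) (BΔ : Matrix (Fin n) (Fin m) ℝ)
    (Δ : ℝ) (hΔ : Δ ≠ 0)
    (AδΔ : Matrix (Fin n) (Fin n) ℝ) (hAδΔ : AδΔ = Δ⁻¹ • (AΔ - 1))
    (BδΔ : Matrix (Fin n) (Fin m) ℝ) (hBδΔ : BδΔ = Δ⁻¹ • BΔ)
    (N : ℕ)
    (Crd Crδ : Matrix (Fin n) (Fin N × Fin m) ℝ)
    (hCrd : ∀ (i : Fin n) (j : Fin N) (r : Fin m), Crd i (j, r) = (AΔ ^ (j : ℕ) * BΔ) i r)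
    (hCrδ : ∀ (i : Fin n) (j : Fin N) (r : Fin m), Crδ i (j, r) = (AδΔ ^ (j : ℕ) * BδΔ) i r) :
    (∀ k : ℕ,
        AδΔ ^ k * BδΔ =
          (Δ ^ (k + 1))⁻¹ •
            ∑ j ∈ Finset.range (k + 1),
              ((-1 : ℝ) ^ (k - j) * (k.choose j : ℝ)) • (AΔ ^ j * BΔ)) ∧
      Crd.rank = Crδ.rank := by
  have hAδ : AδΔ = Δ⁻¹ • AΔ + (-Δ⁻¹) • 1 := by rw [hAδΔ, smul_sub, sub_eq_add_neg, neg_smul]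
  refine ⟨fun k => ?_, Matrix.rank_eq_of_span_blocks_eq hCrd hCrδ ?_⟩
  · rw [hAδΔ, hBδΔ, smul_pow, Matrix.smul_mul, Matrix.mul_smul, smul_smul, sub_eq_add_neg,
      ← neg_one_smul ℝ (1 : Matrix (Fin n) (Fin n) ℝ), Matrix.add_smul_one_pow_mul, ← inv_pow,
      ← pow_succ]
  · change Matrix.blockKrylov AΔ BΔ N = Matrix.blockKrylov AδΔ BδΔ N
    rw [hAδ, hBδΔ, Matrix.blockKrylov_affine_eq _ _ _ (inv_ne_zero hΔ) (inv_ne_zero hΔ)]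

/-- **Remark 5.** (i) Block-column relation between the delta-operator and discrete-time
controllability matrices: `A_δΔ^k * B_δΔ` is `Δ^(−(k+1))` times a signed binomial
combination of the blocks `A_Δ^j * B_Δ`.  (ii) The discrete-time controllability matrix
`[B_Δ, A_Δ B_Δ, …, A_Δ^{N−1} B_Δ]` and the delta-operator controllability matrix
`[B_δΔ, A_δΔ B_δΔ, …, A_δΔ^{N−1} B_δΔ]` have the same rank. -/
theorem delta_controllability_blocks_and_rank
    {n m : ℕ} (AΔ : Matrix (Fin n) (Fin n) ℝ) (BΔ : Matrix (Fin n) (Fin m) ℝ)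
    (Δ : ℝ) (hΔ : Δ ≠ 0)
    (AδΔ : Matrix (Fin n) (Fin n) ℝ) (hAδΔ : AδΔ = Δ⁻¹ • (AΔ - 1))
    (BδΔ : Matrix (Fin n) (Fin m) ℝ) (hBδΔ : BδΔ = Δ⁻¹ • BΔ)
    (N : ℕ) (hN : 1 ≤ N)
    (Crd Crδ : Matrix (Fin n) (Fin N × Fin m) ℝ)
    (hCrd : ∀ (i : Fin n) (j : Fin N) (r : Fin m), Crd i (j, r) = (AΔ ^ (j : ℕ) * BΔ) i r)
    (hCrδ : ∀ (i : Fin n) (j : Fin N) (r : Fin m), Crδ i (j, r) = (AδΔ ^ (j : ℕ) * BδΔ) i r) :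
    (∀ k : ℕ,
        AδΔ ^ k * BδΔ =
          (Δ ^ (k + 1))⁻¹ •
            ∑ j ∈ Finset.range (k + 1),
              ((-1 : ℝ) ^ (k - j) * (k.choose j : ℝ)) • (AΔ ^ j * BΔ)) ∧
      Crd.rank = Crδ.rank :=
  delta_controllability_blocks_and_rank_general AΔ BΔ Δ hΔ AδΔ hAδΔ BδΔ hBδΔ N Crd Crδ hCrd hCrδ
end

section
/- Let R be a (not necessarily commutative) ring and M ∈ R. Then for every natural number l ≥ 1, ∑_{k=0}^{l} (−1)^(l−k) * (l.choose k) • (∑_{i=0}^{k−1} M^i) = (M − 1)^(l−1). (In particular, applied to M = A_Δ, this shows that the l-th block row of E_p Q_p D_o^d equals C·A_δΔ^{l−1}·B_δΔ, i.e., the transformed matrix D_o^δ := E_pQ_pD_o^d has the block structure [0; C·B_δΔ; …; C·A_δΔ^{N−2}·B_δΔ].) -/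
/-!
The signed binomial sum is the `l`-th forward difference at `0` of the sequence
`g k = ∑_{i<k} M^i`. Since `Δ g = (M ^ ·)` and the forward difference of the geometric sequence
multiplies it by `M - 1`, this equals `Δ^[l-1] (M ^ ·) 0 = (M - 1)^(l-1)`.
No division by `M - 1` is needed, so the identity holds in any ring.
-/

open Finset fwdDiff

section

variable {R : Type*} [Ring R] (M : R)

lemma fwdDiff_geom_sum :
    Δ_[1] (fun k : ℕ ↦ ∑ i ∈ range k, M ^ i) = fun k ↦ M ^ k := by
  ext k
  simp only [fwdDiff, sum_range_succ, add_sub_cancel_left]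

lemma fwdDiff_iter_pow (n k : ℕ) : (Δ_[1])^[n] (fun k : ℕ ↦ M ^ k) k = (M - 1) ^ n * M ^ k := by
  let φ : AddChar ℕ R :=
    { toFun := (M ^ ·), map_zero_eq_one' := pow_zero M, map_add_eq_mul' := pow_add M }
  simpa [φ] using fwdDiff_addChar_eq φ k 1 n

end

/-- The ring identity underlying the block structure of `D_o^δ = E_p Q_p D_o^d`:
for any ring element `M` and any `l ≥ 1`, the signed binomial combination of the
geometric sums `∑_{i<k} M^i` collapses to `(M − 1)^(l−1)`. -/
theorem signed_binomial_sum_geom_eq_sub_one_pow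
    {R : Type*} [Ring R] (M : R) :
    ∀ l : ℕ, 1 ≤ l →
      ∑ k ∈ Finset.range (l + 1),
          ((-1 : ℤ) ^ (l - k) * (l.choose k : ℤ)) • (∑ i ∈ Finset.range k, M ^ i) =
        (M - 1) ^ (l - 1) := by
  intro l hl
  obtain ⟨n, rfl⟩ := Nat.exists_eq_add_of_le' hl
  calc _ = (Δ_[1])^[n + 1] (fun k : ℕ ↦ ∑ i ∈ range k, M ^ i) 0 := by
        simp [fwdDiff_iter_eq_sum_shift]
    _ = (M - 1) ^ n := by
        rw [Function.iterate_succ_apply, fwdDiff_geom_sum, fwdDiff_iter_pow, pow_zero, mul_one]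
end

section
/- Let A_τ be an n×n real matrix, B_τ an n×m real matrix, O a q×n real matrix, D a q×m real matrix, and W an invertible q×q real matrix. Define O_δ := W·O and D_δ := W·D, and suppose O_δᵀ·O_δ is invertible. Define L_y^δ := A_τ·(O_δᵀ·O_δ)⁻¹·O_δᵀ·W and L_u^δ := B_τ − A_τ·(O_δᵀ·O_δ)⁻¹·O_δᵀ·D_δ. Then for all vectors x ∈ ℝⁿ, v ∈ ℝᵐ, Y ∈ ℝ^q satisfying Y = O·x + D·v and x⁺ = A_τ·x + B_τ·v, one has x⁺ = L_y^δ·Y + L_u^δ·v. (This is the delta-operator-based multi-rate state estimation identity (14); the case W = E_pQ_p gives O_δ = C_o^δ and avoids the numerical singularity of (C_o^{dᵀ}C_o^d)⁻¹ at fast sampling.) -/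
open Matrix

/-!
Since `O_δᵀ O_δ` is invertible, `(O_δᵀ O_δ)⁻¹ O_δᵀ` is a left inverse of `O_δ = W O`. Hence
`L_y^δ O = A_τ` and `L_y^δ D = A_τ (O_δᵀ O_δ)⁻¹ O_δᵀ D_δ = B_τ - L_u^δ`, so applying `L_y^δ` to
`Y = O x + D v` and adding `L_u^δ v` recovers `A_τ x + B_τ v`.
-/

namespace Matrix

variable {R : Type*} {k l m : Type*} [Fintype l] [Fintype m]

theorem transpose_mul_self_inv_mul_transpose_mul [CommRing R] [DecidableEq m]
    {M : Matrix l m R} (h : IsUnit (Mᵀ * M)) : (Mᵀ * M)⁻¹ * Mᵀ * M = 1 := by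
  rw [Matrix.mul_assoc, nonsing_inv_mul _ ((isUnit_iff_isUnit_det _).mp h)]

theorem mulVec_add_mulVec_eq_of_mul_eq {p : Type*} [Fintype p] [Semiring R]
    {L : Matrix k l R} {O : Matrix l m R} {D : Matrix l p R} {K B : Matrix k p R}
    {A : Matrix k m R} (hA : L * O = A) (hB : L * D + K = B) (x : m → R) (v : p → R) :
    A *ᵥ x + B *ᵥ v = L *ᵥ (O *ᵥ x + D *ᵥ v) + K *ᵥ v := by
  rw [← hA, ← hB, mulVec_add, mulVec_mulVec, mulVec_mulVec, add_mulVec, add_assoc]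

end Matrix

theorem delta_multirate_state_estimation_general
    {n m q : ℕ}
    (Aτ : Matrix (Fin n) (Fin n) ℝ) (Bτ : Matrix (Fin n) (Fin m) ℝ)
    (O : Matrix (Fin q) (Fin n) ℝ) (D : Matrix (Fin q) (Fin m) ℝ)
    (W : Matrix (Fin q) (Fin q) ℝ)
    (Oδ : Matrix (Fin q) (Fin n) ℝ) (hOδ : Oδ = W * O)
    (Dδ : Matrix (Fin q) (Fin m) ℝ) (hDδ : Dδ = W * D)
    (hOδO : IsUnit (Oδᵀ * Oδ))
    (Lyδ : Matrix (Fin n) (Fin q) ℝ) (hLyδ : Lyδ = Aτ * (Oδᵀ * Oδ)⁻¹ * Oδᵀ * W)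
    (Luδ : Matrix (Fin n) (Fin m) ℝ)
    (hLuδ : Luδ = Bτ - Aτ * (Oδᵀ * Oδ)⁻¹ * Oδᵀ * Dδ)
    (x xplus : Fin n → ℝ) (v : Fin m → ℝ) (Y : Fin q → ℝ)
    (hY : Y = O *ᵥ x + D *ᵥ v)
    (hx : xplus = Aτ *ᵥ x + Bτ *ᵥ v) :
    xplus = Lyδ *ᵥ Y + Luδ *ᵥ v := by
  have hleft := transpose_mul_self_inv_mul_transpose_mul hOδO
  have hLyO : Lyδ * O = Aτ := by
    rw [hLyδ, Matrix.mul_assoc _ W O, ← hOδ, Matrix.mul_assoc Aτ, Matrix.mul_assoc Aτ, hleft,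
      Matrix.mul_one]
  have hLyD : Lyδ * D + Luδ = Bτ := by
    rw [hLyδ, hLuδ, hDδ, Matrix.mul_assoc _ W D, add_sub_cancel]
  rw [hx, hY, mulVec_add_mulVec_eq_of_mul_eq hLyO hLyD]

/-- **Delta-operator-based multi-rate state estimation identity (14).**
With an invertible weighting `W` (the case `W = E_p Q_p` gives `O_δ = C_o^δ`),
`O_δ := W O`, `D_δ := W D`, `L_y^δ := A_τ (O_δᵀ O_δ)⁻¹ O_δᵀ W` and
`L_u^δ := B_τ − A_τ (O_δᵀ O_δ)⁻¹ O_δᵀ D_δ`, any triple satisfying `Y = O x + D v` and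
`x⁺ = A_τ x + B_τ v` also satisfies `x⁺ = L_y^δ Y + L_u^δ v`. -/
theorem delta_multirate_state_estimation
    {n m q : ℕ}
    (Aτ : Matrix (Fin n) (Fin n) ℝ) (Bτ : Matrix (Fin n) (Fin m) ℝ)
    (O : Matrix (Fin q) (Fin n) ℝ) (D : Matrix (Fin q) (Fin m) ℝ)
    (W : Matrix (Fin q) (Fin q) ℝ) (hW : IsUnit W)
    (Oδ : Matrix (Fin q) (Fin n) ℝ) (hOδ : Oδ = W * O)
    (Dδ : Matrix (Fin q) (Fin m) ℝ) (hDδ : Dδ = W * D)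
    (hOδO : IsUnit (Oδᵀ * Oδ))
    (Lyδ : Matrix (Fin n) (Fin q) ℝ) (hLyδ : Lyδ = Aτ * (Oδᵀ * Oδ)⁻¹ * Oδᵀ * W)
    (Luδ : Matrix (Fin n) (Fin m) ℝ)
    (hLuδ : Luδ = Bτ - Aτ * (Oδᵀ * Oδ)⁻¹ * Oδᵀ * Dδ)
    (x xplus : Fin n → ℝ) (v : Fin m → ℝ) (Y : Fin q → ℝ)
    (hY : Y = O *ᵥ x + D *ᵥ v)
    (hx : xplus = Aτ *ᵥ x + Bτ *ᵥ v) :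
    xplus = Lyδ *ᵥ Y + Luδ *ᵥ v :=
  delta_multirate_state_estimation_general Aτ Bτ O D W Oδ hOδ Dδ hDδ hOδO Lyδ hLyδ Luδ hLuδ x xplus
    v Y hY hx
end

section
/- Let τ > 0, l_m ≥ 0, d_m ≥ 0, f_m ≥ 0, and ε > d_m + f_m, and set a₁ := 2(ε − d_m − f_m) and b₁ := τ(ε + d_m + f_m)²/a₁. Let s, s̄, d̃, f : ℕ → ℝ be sequences satisfying, for all k: s(k+1) = s(k) + τ·(−ε·sgn(s̄(k)) + d̃(k) + f(k)), |d̃(k)| ≤ d_m, |f(k)| ≤ f_m, and |s(k) − s̄(k)| ≤ l_m. Then for every k with |s(k)| > l_m, one has s(k+1)² − s(k)² ≤ −τ·a₁·(|s(k)| − b₁). (This is the key Lyapunov decrease inequality in the proof of Theorem 2 with V(s) = s².) -/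
/-!
Since `|s − s̄| ≤ l_m < |s|`, the estimate `s̄` has the sign of `s`, so the switching term acts
as `−ε sgn s`. Expanding the square, the cross term `2τ s (−ε sgn s + w)` with `|w| ≤ d_m + f_m`
is at most `−τ a₁ |s|`, and the quadratic term `τ² (−ε sgn s + w)²` is at most
`τ² (ε + d_m + f_m)² = τ a₁ b₁`.
-/

namespace Real

lemma mul_sign_self (x : ℝ) : x * sign x = |x| := by
  rcases lt_trichotomy x 0 with hx | rfl | hx
  · rw [sign_of_neg hx, abs_of_neg hx, mul_neg_one]
  · rw [sign_zero, abs_zero, mul_zero]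
  · rw [sign_of_pos hx, abs_of_pos hx, mul_one]

lemma abs_sign_le_one (x : ℝ) : |sign x| ≤ 1 := by
  rcases sign_apply_eq x with h | h | h <;> norm_num [h]

lemma sign_eq_of_abs_sub_lt_abs {x y : ℝ} (h : |x - y| < |x|) : sign y = sign x := by
  rcases lt_trichotomy x 0 with hx | rfl | hx
  · rw [abs_of_neg hx] at h
    rw [sign_of_neg hx, sign_of_neg (by linarith [neg_abs_le (x - y)])]
  · exact absurd h (by simp)
  · rw [abs_of_pos hx] at h
    rw [sign_of_pos hx, sign_of_pos (by linarith [le_abs_self (x - y)])]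

end Real

lemma sq_step_sign_reaching_sub_sq_le {x τ ε w M : ℝ} (hτ : 0 ≤ τ) (hw : |w| ≤ M) (hM : M < ε) :
    (x + τ * (-ε * Real.sign x + w)) ^ 2 - x ^ 2
      ≤ -(τ * (2 * (ε - M)) * |x|) + τ ^ 2 * (ε + M) ^ 2 := by
  have hε : 0 ≤ ε := by linarith [abs_nonneg w]
  have hcross : x * (-ε * Real.sign x + w) ≤ -(ε - M) * |x| := by
    have hxw : x * w ≤ |x| * M :=
      (le_abs_self _).trans (abs_mul x w ▸ mul_le_mul_of_nonneg_left hw (abs_nonneg x))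
    calc x * (-ε * Real.sign x + w) = -ε * (x * Real.sign x) + x * w := by ring
      _ ≤ -ε * |x| + |x| * M := by rw [Real.mul_sign_self]; linarith
      _ = -(ε - M) * |x| := by ring
  have hincr : |-ε * Real.sign x + w| ≤ ε + M := calc
    |-ε * Real.sign x + w| ≤ |-ε * Real.sign x| + |w| := abs_add_le _ _
    _ = ε * |Real.sign x| + |w| := by rw [abs_mul, abs_neg, abs_of_nonneg hε]
    _ ≤ ε * 1 + M := by gcongr; exact Real.abs_sign_le_one x
    _ = ε + M := by rw [mul_one]
  have hsq : (-ε * Real.sign x + w) ^ 2 ≤ (ε + M) ^ 2 :=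
    sq_le_sq' (abs_le.mp hincr).1 (abs_le.mp hincr).2
  calc (x + τ * (-ε * Real.sign x + w)) ^ 2 - x ^ 2
      = 2 * τ * (x * (-ε * Real.sign x + w)) + τ ^ 2 * (-ε * Real.sign x + w) ^ 2 := by ring
    _ ≤ 2 * τ * (-(ε - M) * |x|) + τ ^ 2 * (ε + M) ^ 2 := by gcongr
    _ = -(τ * (2 * (ε - M)) * |x|) + τ ^ 2 * (ε + M) ^ 2 := by ring

theorem lyapunov_decrease_time_triggered_general
    (τ lm dm fm ε : ℝ) (hτ : 0 < τ)
    (hε : dm + fm < ε)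
    (a₁ b₁ : ℝ) (ha₁ : a₁ = 2 * (ε - dm - fm)) (hb₁ : b₁ = τ * (ε + dm + fm) ^ 2 / a₁)
    (s sbar dtil f : ℕ → ℝ)
    (hdyn : ∀ k, s (k + 1) = s k + τ * (-ε * Real.sign (sbar k) + dtil k + f k))
    (hd : ∀ k, |dtil k| ≤ dm) (hf : ∀ k, |f k| ≤ fm)
    (hl : ∀ k, |s k - sbar k| ≤ lm) :
    ∀ k, lm < |s k| → s (k + 1) ^ 2 - s k ^ 2 ≤ -(τ * a₁ * (|s k| - b₁)) := by
  intro k hk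
  have hsign : Real.sign (sbar k) = Real.sign (s k) :=
    Real.sign_eq_of_abs_sub_lt_abs ((hl k).trans_lt hk)
  have hw : |dtil k + f k| ≤ dm + fm := (abs_add_le _ _).trans (add_le_add (hd k) (hf k))
  have ha₁b₁ : a₁ * b₁ = τ * (ε + (dm + fm)) ^ 2 := by
    rw [hb₁, mul_div_cancel₀ _ (by rw [ha₁]; linarith), add_assoc]
  have hstep := sq_step_sign_reaching_sub_sq_le (x := s k) hτ.le hw hε
  rw [hdyn k, hsign, add_assoc _ (dtil k)]
  calc _ ≤ _ := hstep
    _ = -(τ * a₁ * (|s k| - b₁)) := by rw [ha₁] at ha₁b₁ ⊢; linear_combination (-τ) * ha₁b₁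

/-- **Lyapunov decrease inequality in the proof of Theorem 2** (with `V(s) = s²`).
Under the reaching law `s(k+1) = s(k) + τ(−ε sgn s̄(k) + d̃(k) + f(k))`, with bounds
`|d̃| ≤ d_m`, `|f| ≤ f_m`, `|s − s̄| ≤ l_m` and switching gain `ε > d_m + f_m`, whenever
`|s(k)| > l_m` one has `s(k+1)² − s(k)² ≤ −τ a₁ (|s(k)| − b₁)`. -/
theorem lyapunov_decrease_time_triggered
    (τ lm dm fm ε : ℝ) (hτ : 0 < τ) (hlm : 0 ≤ lm) (hdm : 0 ≤ dm) (hfm : 0 ≤ fm)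
    (hε : dm + fm < ε)
    (a₁ b₁ : ℝ) (ha₁ : a₁ = 2 * (ε - dm - fm)) (hb₁ : b₁ = τ * (ε + dm + fm) ^ 2 / a₁)
    (s sbar dtil f : ℕ → ℝ)
    (hdyn : ∀ k, s (k + 1) = s k + τ * (-ε * Real.sign (sbar k) + dtil k + f k))
    (hd : ∀ k, |dtil k| ≤ dm) (hf : ∀ k, |f k| ≤ fm)
    (hl : ∀ k, |s k - sbar k| ≤ lm) :
    ∀ k, lm < |s k| → s (k + 1) ^ 2 - s k ^ 2 ≤ -(τ * a₁ * (|s k| - b₁)) :=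
  lyapunov_decrease_time_triggered_general τ lm dm fm ε hτ hε a₁ b₁ ha₁ hb₁ s sbar dtil f hdyn hd hf
    hl
end

section
/- Let τ > 0, l_m ≥ 0, d_m ≥ 0, f_m ≥ 0, and ε > d_m + f_m, and set a₁ := 2(ε − d_m − f_m), b₁ := τ(ε + d_m + f_m)²/a₁, and Ω := max(l_m + τ(ε + d_m + f_m), √(b₁² + τ·a₁·b₁)). Let s, s̄, d̃, f : ℕ → ℝ be sequences satisfying, for all k: s(k+1) = s(k) + τ·(−ε·sgn(s̄(k)) + d̃(k) + f(k)), |d̃(k)| ≤ d_m, |f(k)| ≤ f_m, and |s(k) − s̄(k)| ≤ l_m. Then the band {|s| ≤ Ω} is invariant: for every k, if |s(k)| ≤ Ω then |s(k+1)| ≤ Ω. -/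
/-!
When `s̄(k) ≠ 0`, the switching term `−τε sgn s̄(k)` dominates the perturbation
`τ(d̃(k) + f(k))`, so the step pushes `s` away from the side of `sgn s̄(k)`; it cannot overshoot
past `−(l_m + τ(ε + d_m + f_m))`, because `|s(k) − s̄(k)| ≤ l_m` keeps `s(k)` above `−l_m` on the
side of `s̄(k)`. When `s̄(k) = 0`, we have `|s(k)| ≤ l_m` and only the perturbation acts.
-/

section SwitchingStep

variable {x y w c δ l Ω : ℝ}

lemma abs_sub_add_le_of_pos (hy : 0 < y) (hw : |w| ≤ δ) (hδc : δ ≤ c) (hxy : |x - y| ≤ l)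
    (hx : |x| ≤ Ω) (hΩ : l + c + δ ≤ Ω) : |x - c + w| ≤ Ω := by
  obtain ⟨hw₁, hw₂⟩ := abs_le.1 hw
  obtain ⟨hxy₁, -⟩ := abs_le.1 hxy
  obtain ⟨-, hx₂⟩ := abs_le.1 hx
  exact abs_le.2 ⟨by linarith, by linarith⟩

lemma abs_sub_mul_sign_add_le (hw : |w| ≤ δ) (hδc : δ ≤ c) (hxy : |x - y| ≤ l)
    (hx : |x| ≤ Ω) (hΩ : l + c + δ ≤ Ω) : |x - c * Real.sign y + w| ≤ Ω := by
  rcases lt_trichotomy y 0 with hy | rfl | hy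
  · have key := abs_sub_add_le_of_pos (x := -x) (neg_pos.2 hy) (by rwa [abs_neg]) hδc
      (by rwa [neg_sub_neg, abs_sub_comm]) (by rwa [abs_neg]) hΩ
    rw [Real.sign_of_neg hy, ← abs_neg]
    convert key using 2
    ring
  · have hc : 0 ≤ c := (abs_nonneg w).trans (hw.trans hδc)
    rw [Real.sign_zero, mul_zero, sub_zero]
    calc |x + w| ≤ |x| + |w| := abs_add_le x w
      _ ≤ l + δ := add_le_add (by simpa using hxy) hw
      _ ≤ Ω := by linarith
  · rw [Real.sign_of_pos hy, mul_one]
    exact abs_sub_add_le_of_pos hy hw hδc hxy hx hΩ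

end SwitchingStep

theorem qsmb_invariant_time_triggered_general
    (τ lm dm fm ε : ℝ) (hτ : 0 < τ)
    (hε : dm + fm < ε)
    (a₁ b₁ Ω : ℝ)
    (hΩ : Ω = max (lm + τ * (ε + dm + fm)) (Real.sqrt (b₁ ^ 2 + τ * a₁ * b₁)))
    (s sbar dtil f : ℕ → ℝ)
    (hdyn : ∀ k, s (k + 1) = s k + τ * (-ε * Real.sign (sbar k) + dtil k + f k))
    (hd : ∀ k, |dtil k| ≤ dm) (hf : ∀ k, |f k| ≤ fm)
    (hl : ∀ k, |s k - sbar k| ≤ lm) :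
    ∀ k, |s k| ≤ Ω → |s (k + 1)| ≤ Ω := by
  intro k hk
  have hpert : |τ * (dtil k + f k)| ≤ τ * (dm + fm) := by
    rw [abs_mul, abs_of_pos hτ]
    exact mul_le_mul_of_nonneg_left ((abs_add_le _ _).trans (add_le_add (hd k) (hf k))) hτ.le
  have hdom : τ * (dm + fm) ≤ τ * ε := mul_le_mul_of_nonneg_left hε.le hτ.le
  have hband : lm + τ * ε + τ * (dm + fm) ≤ Ω := by
    rw [hΩ]
    exact le_of_eq_of_le (by ring) (le_max_left _ _)
  have step := abs_sub_mul_sign_add_le (y := sbar k) hpert hdom (hl k) hk hband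
  rw [hdyn k]
  convert step using 2
  ring

/-- **Invariance of the quasi-sliding mode band (Theorem 2).**
Under the reaching law `s(k+1) = s(k) + τ(−ε sgn s̄(k) + d̃(k) + f(k))`, with
`ε > d_m + f_m`, the band `{|s| ≤ Ω}` with
`Ω = max(l_m + τ(ε + d_m + f_m), √(b₁² + τ a₁ b₁))` is invariant. -/
theorem qsmb_invariant_time_triggered
    (τ lm dm fm ε : ℝ) (hτ : 0 < τ) (hlm : 0 ≤ lm) (hdm : 0 ≤ dm) (hfm : 0 ≤ fm)
    (hε : dm + fm < ε)
    (a₁ b₁ Ω : ℝ) (ha₁ : a₁ = 2 * (ε - dm - fm)) (hb₁ : b₁ = τ * (ε + dm + fm) ^ 2 / a₁)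
    (hΩ : Ω = max (lm + τ * (ε + dm + fm)) (Real.sqrt (b₁ ^ 2 + τ * a₁ * b₁)))
    (s sbar dtil f : ℕ → ℝ)
    (hdyn : ∀ k, s (k + 1) = s k + τ * (-ε * Real.sign (sbar k) + dtil k + f k))
    (hd : ∀ k, |dtil k| ≤ dm) (hf : ∀ k, |f k| ≤ fm)
    (hl : ∀ k, |s k - sbar k| ≤ lm) :
    ∀ k, |s k| ≤ Ω → |s (k + 1)| ≤ Ω :=
  qsmb_invariant_time_triggered_general τ lm dm fm ε hτ hε a₁ b₁ Ω hΩ s sbar dtil f hdyn hd hf hl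
end

section
/- Let τ > 0, l_m ≥ 0, d_m ≥ 0, f_m ≥ 0, and ε > d_m + f_m, and set a₁ := 2(ε − d_m − f_m), b₁ := τ(ε + d_m + f_m)²/a₁, and Ω := max(l_m + τ(ε + d_m + f_m), √(b₁² + τ·a₁·b₁)). Let s, s̄, d̃, f : ℕ → ℝ be sequences satisfying, for all k: s(k+1) = s(k) + τ·(−ε·sgn(s̄(k)) + d̃(k) + f(k)), |d̃(k)| ≤ d_m, |f(k)| ≤ f_m, and |s(k) − s̄(k)| ≤ l_m. Then the quasi-sliding mode occurs: there exists k̄ ∈ ℕ such that for all k ≥ k̄, |s(k)| ≤ Ω. (Theorem 2.) -/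
/-!
Outside the band `|s| ≤ l_m`, the measurement error cannot flip the sign of `s̄`, so the
switching term `−ε sgn s̄` points towards zero and beats the disturbances: each step moves `s`
towards zero by at least `δ = τ(ε − d_m − f_m) > 0` and changes it by at most
`Δ = τ(ε + d_m + f_m)`. Hence `|s|` decreases by `δ` per step while it exceeds `l_m + Δ`, and the
band `|s| ≤ l_m + Δ`, which lies inside `Ω`, is invariant.
-/

open Filter

theorem eventually_le_of_descent {V : ℕ → ℝ} {c δ : ℝ} (hδ : 0 < δ)
    (hdescent : ∀ k, c < V k → V (k + 1) ≤ V k - δ) (hinv : ∀ k, V k ≤ c → V (k + 1) ≤ c) :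
    ∀ᶠ k in atTop, V k ≤ c := by
  have hreach : ∃ k, V k ≤ c := by
    by_contra! habove
    have hdecay : ∀ k : ℕ, V k ≤ V 0 - k * δ := by
      intro k
      induction k with
      | zero => simp
      | succ k ih =>
        have := hdescent k (habove k)
        push_cast
        linarith
    obtain ⟨n, hn⟩ := exists_nat_gt ((V 0 - c) / δ)
    rw [div_lt_iff₀ hδ] at hn
    linarith [hdecay n, habove n]
  obtain ⟨k₀, hk₀⟩ := hreach
  refine eventually_atTop.mpr ⟨k₀, fun k hk => ?_⟩
  induction k, hk using Nat.le_induction with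
  | base => exact hk₀
  | succ k _ ih => exact hinv k ih

def IsReachingStep (L Δ δ x y : ℝ) : Prop :=
  |y - x| ≤ Δ ∧ (L < x → y ≤ x - δ) ∧ (x < -L → x + δ ≤ y)

namespace IsReachingStep

variable {L Δ δ x y : ℝ}

theorem abs_le_of_abs_le (h : IsReachingStep L Δ δ x y) (hL : 0 ≤ L) (hδ : 0 ≤ δ)
    (hx : |x| ≤ L + Δ) : |y| ≤ L + Δ := by
  obtain ⟨hstep, hpos, hneg⟩ := h
  rw [abs_sub_le_iff] at hstep
  rw [abs_le] at hx ⊢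
  rcases lt_or_ge L x with hxL | hxL
  · have := hpos hxL
    constructor <;> linarith
  rcases lt_or_ge x (-L) with hxL' | hxL'
  · have := hneg hxL'
    constructor <;> linarith
  constructor <;> linarith

theorem abs_le_abs_sub (h : IsReachingStep L Δ δ x y) (hL : 0 ≤ L) (hx : L + Δ < |x|) :
    |y| ≤ |x| - δ := by
  obtain ⟨hstep, hpos, hneg⟩ := h
  have hΔ : 0 ≤ Δ := (abs_nonneg _).trans hstep
  rw [abs_sub_le_iff] at hstep
  rcases lt_abs.mp hx with hx | hx
  · have := hpos (by linarith)
    rw [abs_of_pos (by linarith : 0 < x), abs_of_pos (by linarith : 0 < y)]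
    linarith
  · have := hneg (by linarith)
    rw [abs_of_neg (by linarith : x < 0), abs_of_neg (by linarith : y < 0)]
    linarith

end IsReachingStep

theorem isReachingStep_of_eq_add_sign {τ ε W L x xbar w y : ℝ} (hτ : 0 ≤ τ) (hε : 0 ≤ ε)
    (hw : |w| ≤ W) (hxbar : |x - xbar| ≤ L) (hy : y = x + τ * (-ε * Real.sign xbar + w)) :
    IsReachingStep L (τ * (ε + W)) (τ * (ε - W)) x y := by
  rw [abs_le] at hw
  rw [abs_sub_le_iff] at hxbar
  refine ⟨?_, fun hx => ?_, fun hx => ?_⟩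
  · have hsign : |Real.sign xbar| ≤ 1 := by
      rcases Real.sign_apply_eq xbar with h | h | h <;> norm_num [h]
    calc |y - x| = τ * |-ε * Real.sign xbar + w| := by
          rw [hy, add_sub_cancel_left, abs_mul, abs_of_nonneg hτ]
      _ ≤ τ * (ε * 1 + W) := by
          gcongr
          refine (abs_add_le _ _).trans (add_le_add ?_ (abs_le.mpr hw))
          rw [abs_mul, abs_neg, abs_of_nonneg hε]
          gcongr
      _ = τ * (ε + W) := by ring
  · rw [hy, Real.sign_of_pos (by linarith)]
    nlinarith
  · rw [hy, Real.sign_of_neg (by linarith)]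
    nlinarith

theorem quasi_sliding_mode_time_triggered_general
    (τ lm dm fm ε : ℝ) (hτ : 0 < τ) (hlm : 0 ≤ lm) (hdm : 0 ≤ dm) (hfm : 0 ≤ fm)
    (hε : dm + fm < ε)
    (a₁ b₁ Ω : ℝ)
    (hΩ : Ω = max (lm + τ * (ε + dm + fm)) (Real.sqrt (b₁ ^ 2 + τ * a₁ * b₁)))
    (s sbar dtil f : ℕ → ℝ)
    (hdyn : ∀ k, s (k + 1) = s k + τ * (-ε * Real.sign (sbar k) + dtil k + f k))
    (hd : ∀ k, |dtil k| ≤ dm) (hf : ∀ k, |f k| ≤ fm)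
    (hl : ∀ k, |s k - sbar k| ≤ lm) :
    ∃ kbar : ℕ, ∀ k ≥ kbar, |s k| ≤ Ω := by
  have hstep (k : ℕ) :
      IsReachingStep lm (τ * (ε + (dm + fm))) (τ * (ε - (dm + fm))) (s k) (s (k + 1)) :=
    isReachingStep_of_eq_add_sign (w := dtil k + f k) hτ.le (by linarith)
      ((abs_add_le _ _).trans (add_le_add (hd k) (hf k))) (hl k) (by rw [hdyn k, add_assoc])
  have hδ : 0 < τ * (ε - (dm + fm)) := mul_pos hτ (by linarith)
  obtain ⟨kbar, hkbar⟩ := eventually_atTop.mp <|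
    eventually_le_of_descent (V := fun k => |s k|) hδ
      (fun k => (hstep k).abs_le_abs_sub hlm) (fun k => (hstep k).abs_le_of_abs_le hlm hδ.le)
  refine ⟨kbar, fun k hk => (hkbar k hk).trans ?_⟩
  rw [hΩ, ← add_assoc]
  exact le_max_left _ _

/-- **Theorem 2 (quasi-sliding mode).** Under the reaching law
`s(k+1) = s(k) + τ(−ε sgn s̄(k) + d̃(k) + f(k))`, with bounds `|d̃| ≤ d_m`, `|f| ≤ f_m`,
`|s − s̄| ≤ l_m` and switching gain `ε > d_m + f_m`, the sliding variable enters the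
quasi-sliding mode band `Ω = max(l_m + τ(ε + d_m + f_m), √(b₁² + τ a₁ b₁))` in finite
time and stays there. -/
theorem quasi_sliding_mode_time_triggered
    (τ lm dm fm ε : ℝ) (hτ : 0 < τ) (hlm : 0 ≤ lm) (hdm : 0 ≤ dm) (hfm : 0 ≤ fm)
    (hε : dm + fm < ε)
    (a₁ b₁ Ω : ℝ) (ha₁ : a₁ = 2 * (ε - dm - fm)) (hb₁ : b₁ = τ * (ε + dm + fm) ^ 2 / a₁)
    (hΩ : Ω = max (lm + τ * (ε + dm + fm)) (Real.sqrt (b₁ ^ 2 + τ * a₁ * b₁)))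
    (s sbar dtil f : ℕ → ℝ)
    (hdyn : ∀ k, s (k + 1) = s k + τ * (-ε * Real.sign (sbar k) + dtil k + f k))
    (hd : ∀ k, |dtil k| ≤ dm) (hf : ∀ k, |f k| ≤ fm)
    (hl : ∀ k, |s k - sbar k| ≤ lm) :
    ∃ kbar : ℕ, ∀ k ≥ kbar, |s k| ≤ Ω :=
  quasi_sliding_mode_time_triggered_general τ lm dm fm ε hτ hlm hdm hfm hε a₁ b₁ Ω hΩ s sbar dtil f
    hdyn hd hf hl
end

section
/- Let τ > 0, l_m ≥ 0, d_m ≥ 0, f_m ≥ 0, α ≥ 0, and ε > d_m + f_m + α, and set a₃ := 2(ε − α − d_m − f_m) and b₃ := τ(ε + α + d_m + f_m)²/a₃. Let s, σ, e, d̃, f : ℕ → ℝ be sequences satisfying, for all k: s(k+1) = s(k) + τ·(−e(k) − ε·σ(k) + d̃(k) + f(k)), |e(k)| ≤ α, |d̃(k)| ≤ d_m, |f(k)| ≤ f_m, and σ(k) = sgn(s(k)) whenever |s(k)| > l_m. Then for every k with |s(k)| > l_m, one has s(k+1)² − s(k)² ≤ −τ·a₃·(|s(k)| − b₃). (This is the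 key Lyapunov decrease inequality in the proof of Theorem 3 for the event-triggered sliding mode control.) -/
/-!
Write the closed-loop increment as `τ u` with `u = w - ε sgn s`, where `w = -e + d̃ + f` lumps the
event-induced error and both disturbances, so `|w| ≤ α + d_m + f_m`. Outside the band `σ = sgn s`
and `sgn s · s = |s|`, hence `u s ≤ -(ε - α - d_m - f_m) |s| = -(a₃/2) |s|`, while
`|u| ≤ ε + α + d_m + f_m`. Expanding `(s + τ u)² - s² = 2τ u s + τ² u²` then gives the bound, the
quadratic term `τ² (ε + α + d_m + f_m)²` being exactly `τ a₃ b₃`.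
-/

theorem Real.sign_mul_self_eq_abs (r : ℝ) : Real.sign r * r = |r| := by
  rcases lt_trichotomy r 0 with h | rfl | h
  · rw [Real.sign_of_neg h, abs_of_neg h]; ring
  · simp
  · rw [Real.sign_of_pos h, abs_of_pos h]; ring

theorem Real.abs_sign_le_one_s15 (r : ℝ) : |Real.sign r| ≤ 1 := by
  rcases Real.sign_apply_eq r with h | h | h <;> rw [h] <;> norm_num

theorem mul_le_mul_abs_of_abs_le {x y c : ℝ} (h : |x| ≤ c) : x * y ≤ c * |y| :=
  calc x * y ≤ |x| * |y| := abs_mul x y ▸ le_abs_self _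
    _ ≤ c * |y| := mul_le_mul_of_nonneg_right h (abs_nonneg y)

theorem sub_mul_sign_mul_self_le {w β ε : ℝ} (s : ℝ) (hw : |w| ≤ β) :
    (w - ε * Real.sign s) * s ≤ -((ε - β) * |s|) := by
  have hws : w * s ≤ β * |s| := mul_le_mul_abs_of_abs_le hw
  have hsgn := Real.sign_mul_self_eq_abs s
  linear_combination hws - ε * hsgn

theorem abs_sub_mul_sign_le {w β ε : ℝ} (s : ℝ) (hw : |w| ≤ β) (hε : 0 ≤ ε) :
    |w - ε * Real.sign s| ≤ β + ε :=
  calc |w - ε * Real.sign s| ≤ |w| + ε * |Real.sign s| := by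
        simpa only [abs_mul, abs_of_nonneg hε] using abs_sub w (ε * Real.sign s)
    _ ≤ β + ε * 1 := by gcongr; exact Real.abs_sign_le_one_s15 s
    _ = β + ε := by ring

theorem sq_add_mul_sub_sq_le {s u τ m C : ℝ} (hτ : 0 ≤ τ) (hus : u * s ≤ -(m * |s|))
    (hu : |u| ≤ C) : (s + τ * u) ^ 2 - s ^ 2 ≤ -(2 * τ * m * |s|) + τ ^ 2 * C ^ 2 := by
  have hu2 : u ^ 2 ≤ C ^ 2 := sq_abs u ▸ pow_le_pow_left₀ (abs_nonneg u) hu 2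
  calc (s + τ * u) ^ 2 - s ^ 2 = 2 * τ * (u * s) + τ ^ 2 * u ^ 2 := by ring
    _ ≤ 2 * τ * -(m * |s|) + τ ^ 2 * C ^ 2 := by gcongr
    _ = -(2 * τ * m * |s|) + τ ^ 2 * C ^ 2 := by ring

theorem lyapunov_decrease_event_triggered_general
    (τ lm dm fm α ε : ℝ) (hτ : 0 < τ) (hε : dm + fm + α < ε)
    (a₃ b₃ : ℝ) (ha₃ : a₃ = 2 * (ε - α - dm - fm))
    (hb₃ : b₃ = τ * (ε + α + dm + fm) ^ 2 / a₃)
    (s σ e dtil f : ℕ → ℝ)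
    (hdyn : ∀ k, s (k + 1) = s k + τ * (-e k - ε * σ k + dtil k + f k))
    (he : ∀ k, |e k| ≤ α) (hd : ∀ k, |dtil k| ≤ dm) (hf : ∀ k, |f k| ≤ fm)
    (hσ : ∀ k, lm < |s k| → σ k = Real.sign (s k)) :
    ∀ k, lm < |s k| → s (k + 1) ^ 2 - s k ^ 2 ≤ -(τ * a₃ * (|s k| - b₃)) := by
  intro k hk
  set w := -e k + dtil k + f k
  have hw : |w| ≤ α + dm + fm := by
    simpa only [abs_neg] using (abs_add_three (-e k) (dtil k) (f k)).trans
      (add_le_add_three (abs_neg (e k) ▸ he k) (hd k) (hf k))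
  have hε₀ : 0 ≤ ε := by linarith [abs_nonneg w]
  have ha₃₀ : a₃ ≠ 0 := by rw [ha₃]; linarith
  have hstep : s (k + 1) = s k + τ * (w - ε * Real.sign (s k)) := by
    rw [hdyn, hσ k hk]; ring
  have hab : τ * a₃ * b₃ = τ ^ 2 * (α + dm + fm + ε) ^ 2 := by
    rw [hb₃]; field_simp; ring
  rw [hstep]
  calc _ ≤ -(2 * τ * (ε - (α + dm + fm)) * |s k|) + τ ^ 2 * (α + dm + fm + ε) ^ 2 :=
        sq_add_mul_sub_sq_le hτ.le (sub_mul_sign_mul_self_le (s k) hw)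
          (abs_sub_mul_sign_le (s k) hw hε₀)
    _ = -(τ * a₃ * (|s k| - b₃)) := by linear_combination (τ * |s k|) * ha₃ - hab

/-- **Lyapunov decrease inequality in the proof of Theorem 3 (event-triggered SMC).**
Under `s(k+1) = s(k) + τ(−e(k) − ε σ(k) + d̃(k) + f(k))` with event error `|e| ≤ α`,
disturbance bounds `|d̃| ≤ d_m`, `|f| ≤ f_m`, sign consistency `σ(k) = sgn s(k)`
whenever `|s(k)| > l_m`, and switching gain `ε > d_m + f_m + α`, whenever `|s(k)| > l_m`
one has `s(k+1)² − s(k)² ≤ −τ a₃ (|s(k)| − b₃)`. -/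
theorem lyapunov_decrease_event_triggered
    (τ lm dm fm α ε : ℝ) (hτ : 0 < τ) (hlm : 0 ≤ lm) (hdm : 0 ≤ dm) (hfm : 0 ≤ fm)
    (hα : 0 ≤ α) (hε : dm + fm + α < ε)
    (a₃ b₃ : ℝ) (ha₃ : a₃ = 2 * (ε - α - dm - fm))
    (hb₃ : b₃ = τ * (ε + α + dm + fm) ^ 2 / a₃)
    (s σ e dtil f : ℕ → ℝ)
    (hdyn : ∀ k, s (k + 1) = s k + τ * (-e k - ε * σ k + dtil k + f k))
    (he : ∀ k, |e k| ≤ α) (hd : ∀ k, |dtil k| ≤ dm) (hf : ∀ k, |f k| ≤ fm)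
    (hσ : ∀ k, lm < |s k| → σ k = Real.sign (s k)) :
    ∀ k, lm < |s k| → s (k + 1) ^ 2 - s k ^ 2 ≤ -(τ * a₃ * (|s k| - b₃)) :=
  lyapunov_decrease_event_triggered_general τ lm dm fm α ε hτ hε a₃ b₃ ha₃ hb₃ s σ e dtil f hdyn he
    hd hf hσ
end

section
/- Let τ > 0, l_m ≥ 0, d_m ≥ 0, f_m ≥ 0, α ≥ 0, ρ ≥ 0, and ε > d_m + f_m + α. Set a₁ := 2(ε − d_m − f_m), b₁ := τ(ε + d_m + f_m)²/a₁, Ω := max(l_m + τ(ε + d_m + f_m), √(b₁² + τ·a₁·b₁)), a₃ := 2(ε − α − d_m − f_m), b₃ := τ(ε + α + d_m + f_m)²/a₃, and Ω₁ := max(l_m + τ(ε + d_m + f_m), max(√(b₃² + τ·a₃·b₃), ρ + l_m)). Then Ω₁ ≥ Ω: the practical quasi-sliding mode band of the event-triggered controller is always at least as large as the quasi-sliding mode band of the time-triggered controller. (Remark 10.) -/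
/-! Both bands share the term `lm + τ (ε + dm + fm)`, so it suffices to compare the
square-root terms. With `c` the bound on the switching-plus-disturbance term and
`b = τ c² / a`, one has `b² + τ a b = τ² (c⁴ / a² + c²)`, which grows with `c` and shrinks
with `a`; the event error `α` raises `c` and lowers `a`. -/

lemma sq_add_mul_of_eq_div {τ a c : ℝ} (ha : a ≠ 0) :
    (τ * c ^ 2 / a) ^ 2 + τ * a * (τ * c ^ 2 / a) = τ ^ 2 * ((c ^ 2 / a) ^ 2 + c ^ 2) := by
  field_simp

lemma sqrt_sq_add_mul_div_le {τ a a' c c' : ℝ} (hc : 0 ≤ c) (hcc' : c ≤ c') (ha' : 0 < a')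
    (ha'a : a' ≤ a) :
    √((τ * c ^ 2 / a) ^ 2 + τ * a * (τ * c ^ 2 / a)) ≤
      √((τ * c' ^ 2 / a') ^ 2 + τ * a' * (τ * c' ^ 2 / a')) := by
  have ha : 0 < a := ha'.trans_le ha'a
  rw [sq_add_mul_of_eq_div ha.ne', sq_add_mul_of_eq_div ha'.ne']
  gcongr

theorem practical_qsmb_ge_qsmb_general
    (τ lm dm fm α ρ ε : ℝ) (hdm : 0 ≤ dm) (hfm : 0 ≤ fm)
    (hα : 0 ≤ α) (hε : dm + fm + α < ε)
    (a₁ b₁ Ω a₃ b₃ Ω₁ : ℝ)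
    (ha₁ : a₁ = 2 * (ε - dm - fm)) (hb₁ : b₁ = τ * (ε + dm + fm) ^ 2 / a₁)
    (hΩ : Ω = max (lm + τ * (ε + dm + fm)) (Real.sqrt (b₁ ^ 2 + τ * a₁ * b₁)))
    (ha₃ : a₃ = 2 * (ε - α - dm - fm)) (hb₃ : b₃ = τ * (ε + α + dm + fm) ^ 2 / a₃)
    (hΩ₁ : Ω₁ = max (lm + τ * (ε + dm + fm))
        (max (Real.sqrt (b₃ ^ 2 + τ * a₃ * b₃)) (ρ + lm))) :
    Ω ≤ Ω₁ := by
  subst hΩ hΩ₁ hb₁ hb₃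
  have hsqrt := sqrt_sq_add_mul_div_le (τ := τ) (a := a₁) (a' := a₃) (c := ε + dm + fm)
    (c' := ε + α + dm + fm) (by linarith) (by linarith) (by linarith) (by linarith)
  exact max_le_max le_rfl (le_max_of_le_left hsqrt)

/-- **Remark 10.** The practical quasi-sliding mode band `Ω₁` of the event-triggered
controller is always at least as large as the quasi-sliding mode band `Ω` of the
time-triggered controller. -/
theorem practical_qsmb_ge_qsmb
    (τ lm dm fm α ρ ε : ℝ) (hτ : 0 < τ) (hlm : 0 ≤ lm) (hdm : 0 ≤ dm) (hfm : 0 ≤ fm)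
    (hα : 0 ≤ α) (hρ : 0 ≤ ρ) (hε : dm + fm + α < ε)
    (a₁ b₁ Ω a₃ b₃ Ω₁ : ℝ)
    (ha₁ : a₁ = 2 * (ε - dm - fm)) (hb₁ : b₁ = τ * (ε + dm + fm) ^ 2 / a₁)
    (hΩ : Ω = max (lm + τ * (ε + dm + fm)) (Real.sqrt (b₁ ^ 2 + τ * a₁ * b₁)))
    (ha₃ : a₃ = 2 * (ε - α - dm - fm)) (hb₃ : b₃ = τ * (ε + α + dm + fm) ^ 2 / a₃)
    (hΩ₁ : Ω₁ = max (lm + τ * (ε + dm + fm))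
        (max (Real.sqrt (b₃ ^ 2 + τ * a₃ * b₃)) (ρ + lm))) :
    Ω ≤ Ω₁ :=
  practical_qsmb_ge_qsmb_general τ lm dm fm α ρ ε hdm hfm hα hε a₁ b₁ Ω a₃ b₃ Ω₁ ha₁ hb₁ hΩ ha₃ hb₃
    hΩ₁
end
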